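/- Let k be an algebraically closed field of characteristic 0, let V ⊆ k^m be an irreducible affine variety with affine coordinate ring A = k[X_1,…,X_m]/I(V), and let h be an element of the integral closure of A in its fraction field. Then h is weakly subintegral over A if and only if there exists a polynomial F ∈ k[X_1,…,X_m,T], monic in T, such that Γ_h ⊆ p^{-1}(V) ∩ ZZ(F). -/

import Mathlib

open Polynomial

/-- An element `b` is weakly subintegral over a subset (subring) `R` of `B`:
there are `q ≥ 0` and `a_i ∈ R` (`1 ≤ i ≤ 2q+1`) with
`b^n + ∑_{i=1}^n (n choose i) a_i b^{n-i} = 0` for `q+1 ≤ n ≤ 2q+1`. -/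
def WSubOver {B : Type*} [CommRing B] (R : Set B) (b : B) : Prop :=
  ∃ q : ℕ, ∃ a : ℕ → B, (∀ i, a i ∈ R) ∧
    ∀ n, q + 1 ≤ n → n ≤ 2 * q + 1 →
      b ^ n + ∑ i ∈ Finset.Icc 1 n, (n.choose i : B) * a i * b ^ (n - i) = 0

/-- Evaluation of a polynomial `F ∈ k[X_1,…,X_m][T]` at a point `(x,t) ∈ k^m × k`. -/
noncomputable def evXT {k : Type*} [CommSemiring k] {m : ℕ}
    (F : Polynomial (MvPolynomial (Fin m) k)) (x : Fin m → k) (t : k) : k :=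
  Polynomial.eval t (F.map (MvPolynomial.eval x))

/-- `ZZ(F)`: the common zero set of `F` and of its derivatives `∂^j F/∂T^j`,
`j = 1, …, ⌊deg F / 2⌋`. -/
noncomputable def ZZset {k : Type*} [CommSemiring k] {m : ℕ}
    (F : Polynomial (MvPolynomial (Fin m) k)) : Set ((Fin m → k) × k) :=
  {p | ∀ j ≤ F.natDegree / 2, evXT (Polynomial.derivative^[j] F) p.1 p.2 = 0}

/-- The graph `Γ_h ⊆ Reg(h) × k` of a rational function `h` on the variety `V`:
pairs `(x, h(x))` where `h` is regular at `x ∈ V`, i.e. `h = g/f` with `f(x) ≠ 0`. -/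
noncomputable def graphSet {k : Type*} [Field k] {m : ℕ} (V : Set (Fin m → k))
    (h : FractionRing (MvPolynomial (Fin m) k ⧸ MvPolynomial.vanishingIdeal k V)) :
    Set ((Fin m → k) × k) :=
  {p | p.1 ∈ V ∧ ∃ f g : MvPolynomial (Fin m) k,
    MvPolynomial.eval p.1 f ≠ 0 ∧
    h * algebraMap (MvPolynomial (Fin m) k ⧸ MvPolynomial.vanishingIdeal k V) _
          (Ideal.Quotient.mk (MvPolynomial.vanishingIdeal k V) f)
      = algebraMap (MvPolynomial (Fin m) k ⧸ MvPolynomial.vanishingIdeal k V) _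
          (Ideal.Quotient.mk (MvPolynomial.vanishingIdeal k V) g) ∧
    p.2 * MvPolynomial.eval p.1 f = MvPolynomial.eval p.1 g}


/-!
Write `G_n = wsubPoly c n = ∑_{i ≤ n} (n choose i) c_i T^{n-i}`. With `c_0 = 1` the relations
defining weak subintegrality say `G_n(h) = 0` for `q + 1 ≤ n ≤ 2q + 1`, and since
`G_{n+1}' = (n + 1) G_n` these are exactly the vanishing at `h` of `G_{2q+1}, …, G_{2q+1}^{(q)}`.
In characteristic `0` every monic polynomial of degree `2q + 1` is such a `G_{2q+1}`, and a monic
polynomial of even degree `2q` is brought to degree `2q + 1` by multiplying it by `T`.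

On the geometric side, for `h = g / f` the polynomial `Q = f^{deg P} P(g / f) ∈ k[X]` maps to
`f^{deg P} P(h)` in `Frac A` and takes the value `f(x)^{deg P} P(x, t)` at a graph point `(x, t)`.
If `P` vanishes on `Γ_h` then `Q f` vanishes on all of `V`, so, `I(V)` being prime, `P` vanishes
on `Γ_h` exactly when `P(h) = 0`. Hence `Γ_h ⊆ ZZ(F)` says that `h` is a root of
`F, F', …, F^{(⌊N/2⌋)}`, and monic polynomials over `A` lift to monic ones over `k[X]`.
-/

section WsubPoly

variable {A : Type*} [CommRing A]

noncomputable def wsubPoly (c : ℕ → A) (n : ℕ) : A[X] :=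
  ∑ i ∈ Finset.range (n + 1), C (n.choose i * c i) * X ^ (n - i)

theorem natDegree_wsubPoly_le (c : ℕ → A) (n : ℕ) : (wsubPoly c n).natDegree ≤ n :=
  natDegree_sum_le_of_forall_le _ _ fun i _ =>
    (natDegree_C_mul_X_pow_le _ _).trans (Nat.sub_le n i)

theorem monic_wsubPoly {c : ℕ → A} (hc : c 0 = 1) (n : ℕ) : (wsubPoly c n).Monic := by
  refine monic_of_natDegree_le_of_coeff_eq_one n (natDegree_wsubPoly_le c n) ?_
  rw [wsubPoly, finsetSum_coeff, Finset.sum_eq_single 0]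
  · simp [hc]
  · intro i hi hi0
    rw [Finset.mem_range] at hi
    rw [coeff_C_mul_X_pow, if_neg (by omega)]
  · simp

theorem aeval_wsubPoly {K : Type*} [CommRing K] [Algebra A K] {c : ℕ → A} (hc : c 0 = 1)
    (b : K) (n : ℕ) :
    aeval b (wsubPoly c n) =
      b ^ n + ∑ i ∈ Finset.Icc 1 n, (n.choose i : K) * algebraMap A K (c i) * b ^ (n - i) := by
  rw [wsubPoly, Finset.range_eq_Ico, Finset.sum_eq_sum_Ico_succ_bot (Nat.succ_pos n)]
  simp [hc, Finset.Ico_add_one_right_eq_Icc]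

theorem derivative_wsubPoly_succ (c : ℕ → A) (n : ℕ) :
    derivative (wsubPoly c (n + 1)) = ((n + 1 : ℕ) : A[X]) * wsubPoly c n := by
  rw [wsubPoly, Finset.sum_range_succ, wsubPoly, Finset.mul_sum, derivative_add, derivative_sum]
  simp only [Nat.sub_self, pow_zero, mul_one, derivative_C, add_zero]
  refine Finset.sum_congr rfl fun i hi => ?_
  rw [Finset.mem_range] at hi
  rw [derivative_C_mul_X_pow, show n + 1 - i - 1 = n - i by omega, ← C_eq_natCast, ← mul_assoc,
    ← C_mul]
  congr 2
  rw [mul_right_comm, ← Nat.cast_mul, ← Nat.choose_mul_succ_eq, Nat.cast_mul]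
  ring

theorem iterate_derivative_wsubPoly (c : ℕ → A) {n j : ℕ} (hj : j ≤ n) :
    derivative^[j] (wsubPoly c n) = (n.descFactorial j : A[X]) * wsubPoly c (n - j) := by
  induction j with
  | zero => simp
  | succ j ih =>
    obtain ⟨l, hl⟩ : ∃ l, n - j = l + 1 := ⟨n - (j + 1), by omega⟩
    rw [Function.iterate_succ_apply', ih (by omega), derivative_natCast_mul, hl,
      derivative_wsubPoly_succ, Nat.descFactorial_succ, hl, show n - (j + 1) = l by omega]
    push_cast
    ring

theorem wsubPoly_inv_choose_smul_coeff [Algebra ℚ A] {G : A[X]} {n : ℕ}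
    (hG : G.natDegree ≤ n) :
    wsubPoly (fun i => ((n.choose i : ℚ)⁻¹ • G.coeff (n - i))) n = G := by
  conv_rhs => rw [G.as_sum_range' (n + 1) (by omega), ← Finset.sum_range_reflect]
  refine Finset.sum_congr rfl fun i hi => ?_
  rw [Finset.mem_range] at hi
  rw [← C_mul_X_pow_eq_monomial, show n + 1 - 1 - i = n - i by omega, mul_smul_comm,
    ← nsmul_eq_mul, ← Nat.cast_smul_eq_nsmul ℚ, smul_smul,
    inv_mul_cancel₀ (by exact_mod_cast (Nat.choose_pos (by omega)).ne'), one_smul]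

end WsubPoly

section WSubOverCriterion

variable {A K : Type*} [CommRing A] [CommRing K] [Algebra A K]

theorem exists_monic_of_wSubOver {b : K} (hb : WSubOver (Set.range (algebraMap A K)) b) :
    ∃ G : A[X], G.Monic ∧ ∀ j ≤ G.natDegree / 2, aeval b (derivative^[j] G) = 0 := by
  obtain ⟨q, a, ha, hzero⟩ := hb
  choose c hc using ha
  have hc0 : Function.update c 0 1 0 = 1 := Function.update_self ..
  refine ⟨wsubPoly (Function.update c 0 1) (2 * q + 1), monic_wsubPoly hc0 _, fun j hj => ?_⟩
  have hjq : j ≤ q := by have := natDegree_wsubPoly_le (Function.update c 0 1) (2 * q + 1); omega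
  rw [iterate_derivative_wsubPoly _ (by omega), map_mul, aeval_wsubPoly hc0]
  refine mul_eq_zero_of_right _ ((congrArg (_ + ·) (Finset.sum_congr rfl fun i hi => ?_)).trans
    (hzero (2 * q + 1 - j) (by omega) (by omega)))
  rw [Function.update_of_ne (by simp at hi; omega), hc]

theorem wSubOver_of_monic_of_natDegree_eq [Algebra ℚ A] {G : A[X]} (hG : G.Monic) {q : ℕ}
    (hdeg : G.natDegree = 2 * q + 1) {b : K} (hb : ∀ j ≤ q, aeval b (derivative^[j] G) = 0) :
    WSubOver (Set.range (algebraMap A K)) b := by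
  set c : ℕ → A := fun i => ((2 * q + 1).choose i : ℚ)⁻¹ • G.coeff (2 * q + 1 - i)
  have hc0 : c 0 = 1 := by simp [c, ← hdeg, hG.coeff_natDegree]
  have hGc : wsubPoly c (2 * q + 1) = G := wsubPoly_inv_choose_smul_coeff hdeg.le
  refine ⟨q, fun i => algebraMap A K (c i), fun i => ⟨c i, rfl⟩, fun n hn hn' => ?_⟩
  have hunit : IsUnit (((2 * q + 1).descFactorial (2 * q + 1 - n) : ℕ) : K) := by
    have hne : ((2 * q + 1).descFactorial (2 * q + 1 - n) : ℚ) ≠ 0 := by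
      exact_mod_cast (Nat.descFactorial_pos.2 (by omega)).ne'
    simpa using ((isUnit_iff_ne_zero.2 hne).map (algebraMap ℚ A)).map (algebraMap A K)
  have := hb (2 * q + 1 - n) (by omega)
  rwa [← hGc, iterate_derivative_wsubPoly c (by omega), map_mul, map_natCast,
    hunit.mul_right_eq_zero, Nat.sub_sub_self hn', aeval_wsubPoly hc0] at this

theorem wSubOver_range_algebraMap_iff [Algebra ℚ A] [Nontrivial A] {b : K} :
    WSubOver (Set.range (algebraMap A K)) b ↔
      ∃ G : A[X], G.Monic ∧ ∀ j ≤ G.natDegree / 2, aeval b (derivative^[j] G) = 0 := by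
  refine ⟨exists_monic_of_wSubOver, fun ⟨G, hG, hb⟩ => ?_⟩
  obtain ⟨q, hq | hq⟩ := Nat.even_or_odd' G.natDegree
  · refine wSubOver_of_monic_of_natDegree_eq (hG.mul monic_X)
      (by rw [natDegree_mul_X hG.ne_zero, hq]) fun j hj => ?_
    rw [iterate_derivative_mul_X, map_add, map_mul, map_nsmul, hb j (by omega),
      hb (j - 1) (by omega), zero_mul, smul_zero, add_zero]
  · exact wSubOver_of_monic_of_natDegree_eq hG hq fun j hj => hb j (by omega)

end WSubOverCriterion

theorem Polynomial.map_eval_scaleRoots {R S : Type*} [CommRing R] [CommRing S] (ψ : R →+* S)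
    (P : R[X]) {f g : R} {t : S} (ht : t * ψ f = ψ g) :
    ψ ((P.scaleRoots f).eval g) = ψ f ^ P.natDegree * P.eval₂ ψ t := by
  rw [← eval₂_at_apply, ← ht, mul_comm, scaleRoots_eval₂_mul]

section Graph

variable {k : Type*} [Field k] {m : ℕ} {V : Set (Fin m → k)}
  {h : FractionRing (MvPolynomial (Fin m) k ⧸ MvPolynomial.vanishingIdeal k V)}

local notation "𝓘" => MvPolynomial.vanishingIdeal k V

local notation "𝒜" => MvPolynomial (Fin m) k ⧸ 𝓘

theorem evXT_eq_eval₂ (P : Polynomial (MvPolynomial (Fin m) k)) (x : Fin m → k) (t : k) :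
    evXT P x t = P.eval₂ (MvPolynomial.eval x) t :=
  eval_map _ _

theorem evXT_eq_zero_of_mem_graphSet {P : Polynomial (MvPolynomial (Fin m) k)}
    (hP : aeval h (P.map (Ideal.Quotient.mk 𝓘)) = 0) {p : (Fin m → k) × k}
    (hp : p ∈ graphSet V h) : evXT P p.1 p.2 = 0 := by
  obtain ⟨hx, f, g, hf, hfg, htf⟩ := hp
  have hQ : (P.scaleRoots f).eval g ∈ 𝓘 := by
    rw [← Ideal.Quotient.eq_zero_iff_mem]
    apply IsFractionRing.injective 𝒜 (FractionRing 𝒜)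
    rw [aeval_def, eval₂_map] at hP
    rw [map_zero, ← RingHom.comp_apply, map_eval_scaleRoots _ P hfg, hP, mul_zero]
  have hQx : MvPolynomial.eval p.1 ((P.scaleRoots f).eval g) = 0 := hQ p.1 hx
  rw [map_eval_scaleRoots _ P htf, mul_eq_zero_iff_left (pow_ne_zero _ hf)] at hQx
  rwa [evXT_eq_eval₂]

theorem aeval_eq_zero_of_forall_mem_graphSet [Ideal.IsPrime 𝓘]
    {P : Polynomial (MvPolynomial (Fin m) k)} (hP : ∀ p ∈ graphSet V h, evXT P p.1 p.2 = 0) :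
    aeval h (P.map (Ideal.Quotient.mk 𝓘)) = 0 := by
  obtain ⟨g', f', hf', rfl⟩ := IsFractionRing.div_surjective 𝒜 h
  obtain ⟨f, rfl⟩ := Ideal.Quotient.mk_surjective f'
  obtain ⟨g, rfl⟩ := Ideal.Quotient.mk_surjective g'
  have hf := IsFractionRing.to_map_ne_zero_of_mem_nonZeroDivisors (K := FractionRing 𝒜) hf'
  have hfg := div_mul_cancel₀ (algebraMap 𝒜 (FractionRing 𝒜) (Ideal.Quotient.mk 𝓘 g)) hf
  set Q := (P.scaleRoots f).eval g
  -- off `{f = 0}`, every point `x` of `V` carries the graph point `(x, g(x) / f(x))`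
  have hQf : Q * f ∈ 𝓘 := MvPolynomial.mem_vanishingIdeal_iff.2 fun x hx =>
    show MvPolynomial.eval x (Q * f) = 0 by
      rw [map_mul]
      by_cases hfx : MvPolynomial.eval x f = 0
      · rw [hfx, mul_zero]
      have htf := div_mul_cancel₀ (MvPolynomial.eval x g) hfx
      rw [map_eval_scaleRoots _ P htf, ← evXT_eq_eval₂, hP (x, _) ⟨hx, f, g, hfx, hfg, htf⟩,
        mul_zero, zero_mul]
  have hQ : Q ∈ 𝓘 := (‹Ideal.IsPrime 𝓘›.mem_or_mem hQf).resolve_right fun hfI =>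
    hf (by rw [Ideal.Quotient.eq_zero_iff_mem.2 hfI, map_zero])
  have hφQ :=
    map_eval_scaleRoots ((algebraMap 𝒜 (FractionRing 𝒜)).comp (Ideal.Quotient.mk 𝓘)) P hfg
  rw [RingHom.comp_apply, Ideal.Quotient.eq_zero_iff_mem.2 hQ, map_zero, eq_comm,
    RingHom.comp_apply, mul_eq_zero_iff_left (pow_ne_zero _ hf)] at hφQ
  rwa [aeval_def, eval₂_map]

theorem forall_mem_graphSet_evXT_eq_zero_iff [Ideal.IsPrime 𝓘]
    (P : Polynomial (MvPolynomial (Fin m) k)) :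
    (∀ p ∈ graphSet V h, evXT P p.1 p.2 = 0) ↔ aeval h (P.map (Ideal.Quotient.mk 𝓘)) = 0 :=
  ⟨aeval_eq_zero_of_forall_mem_graphSet, fun hP _ => evXT_eq_zero_of_mem_graphSet hP⟩

end Graph

theorem weaklySubintegral_iff_graph_in_zzSet {k : Type*} [Field k]
    [CharZero k] {m : ℕ} (V : Set (Fin m → k))
    [hVirr : (MvPolynomial.vanishingIdeal k V).IsPrime]
    (h : FractionRing (MvPolynomial (Fin m) k ⧸ MvPolynomial.vanishingIdeal k V)) :
    WSubOver (Set.range (algebraMap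
        (MvPolynomial (Fin m) k ⧸ MvPolynomial.vanishingIdeal k V)
        (FractionRing (MvPolynomial (Fin m) k ⧸ MvPolynomial.vanishingIdeal k V)))) h ↔
      ∃ F : Polynomial (MvPolynomial (Fin m) k), F.Monic ∧
        graphSet V h ⊆ {p : (Fin m → k) × k | p.1 ∈ V} ∩ ZZset F := by
  rw [wSubOver_range_algebraMap_iff]
  constructor
  · rintro ⟨G, hG, hb⟩
    obtain ⟨F, rfl, hdeg, hF⟩ := lifts_and_natDegree_eq_and_monic
      (mem_lifts_of_surjective Ideal.Quotient.mk_surjective G) hG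
    refine ⟨F, hF, fun p hp => ⟨hp.1, fun j hj => ?_⟩⟩
    refine (forall_mem_graphSet_evXT_eq_zero_iff _).2 ?_ p hp
    rw [← iterate_derivative_map]
    exact hb j (hdeg ▸ hj)
  · rintro ⟨F, hF, hsub⟩
    refine ⟨F.map (Ideal.Quotient.mk _), hF.map _, fun j hj => ?_⟩
    rw [iterate_derivative_map, ← forall_mem_graphSet_evXT_eq_zero_iff]
    exact fun p hp => (hsub hp).2 j (by rwa [hF.natDegree_map] at hj)
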